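/- There exist constants c₁, c₂ > 0, depending only on α and d, such that for every x ∈ ℤ^d and every real r > 0 one has the inclusions B(x, ρ_x^{−1}(c₁ r)) ⊆ B_ρ(x, r) ⊆ B(x, ρ_x^{−1}(c₂ r)). -/

import Mathlib

open scoped BigOperators

/-- ℓ∞ norm on ℤ^d, as a natural number. -/
def linf {d : ℕ} (x : Fin d → ℤ) : ℕ :=
  Finset.univ.sup fun i => (x i).natAbs

/-- ℓ¹ norm on ℤ^d, as a natural number. -/
def l1 {d : ℕ} (x : Fin d → ℤ) : ℕ :=
  ∑ i, (x i).natAbs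

/-- `ν x = (max(|x|,1))^α`. -/
noncomputable def nu (α : ℝ) {d : ℕ} (x : Fin d → ℤ) : ℝ :=
  ((max (linf x) 1 : ℕ) : ℝ) ^ α

/-- The conductance `μ x y = (max(|x|,|y|))^(-α)` if `|x-y|₁ = 1`, and `0` otherwise. -/
noncomputable def mu (α : ℝ) {d : ℕ} (x y : Fin d → ℤ) : ℝ :=
  if l1 (x - y) = 1 then ((max (linf x) (linf y) : ℕ) : ℝ) ^ (-α) else 0

/-- `z 0, …, z m` is a path: consecutive points are at ℓ¹-distance one. -/
def IsPath {d : ℕ} (z : ℕ → Fin d → ℤ) (m : ℕ) : Prop :=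
  ∀ i < m, l1 (z (i + 1) - z i) = 1

/-- The metric `ρ(x,y)`: `0` if `x = y`, otherwise the infimum of `∑ ν (z i)` over
paths from `x` to `y`. -/
noncomputable def rho (α : ℝ) {d : ℕ} (x y : Fin d → ℤ) : ℝ :=
  if x = y then 0
  else sInf {S : ℝ | ∃ (m : ℕ) (z : ℕ → Fin d → ℤ), IsPath z m ∧ z 0 = x ∧ z m = y ∧
    S = ∑ i ∈ Finset.range (m + 1), nu α (z i)}

/-- `ρ_x(r) = (max(|x|,r))^α · r`. -/
noncomputable def rhox (α : ℝ) {d : ℕ} (x : Fin d → ℤ) (r : ℝ) : ℝ :=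
  (max ((linf x : ℕ) : ℝ) r) ^ α * r

/-- `ρ_x⁻¹(r) = (max(|x|, r^{1/(1+α)}))^{-α} · r`, the inverse function of `ρ_x`. -/
noncomputable def rhoxInv (α : ℝ) {d : ℕ} (x : Fin d → ℤ) (r : ℝ) : ℝ :=
  (max ((linf x : ℕ) : ℝ) (r ^ (1 / (1 + α)))) ^ (-α) * r

/-- `V(x,r) = ν(B(x,r))`, the ν-volume of the ℓ∞-ball of radius `r` about `x`. -/
noncomputable def V (α : ℝ) {d : ℕ} (x : Fin d → ℤ) (r : ℝ) : ℝ :=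
  ∑' y : {y : Fin d → ℤ // ((linf (y - x) : ℕ) : ℝ) ≤ r}, nu α y.1

/-- `V_ρ(x,r) = ν(B_ρ(x,r))`, the ν-volume of the ρ-ball of radius `r` about `x`. -/
noncomputable def Vrho (α : ℝ) {d : ℕ} (x : Fin d → ℤ) (r : ℝ) : ℝ :=
  ∑' y : {y : Fin d → ℤ // rho α x y ≤ r}, nu α y.1

/-!
Write `n = |y - x|` and `M = max(|x|, n)`, so that `ρ_x(n) = M^α n`; both inclusions amount to
`c ρ_x(|y - x|) ≤ ρ(x, y) ≤ C ρ_x(|y - x|)`, because `ρ_x` is an increasing bijection of `(0, ∞)`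
with inverse `ρ_x⁻¹`.

Upper bound: walk from `x` to `y` one coordinate at a time. The path stays in `B(x, n)` and has at
most `dn + 1` points. If `α ≥ 0` or `|x| ≥ 2n`, then `ν ≤ 2^|α| M^α` on `B(x, n)`. Otherwise
`α < 0` and `M ≤ 2n`; along a coordinate segment the moving coordinate takes distinct values, so
the segment costs at most `2 ∑_{k ≤ n} max(k,1)^α ≤ 2 (1 + n^{1+α}/(1+α))`.

Lower bound: any path from `x` to `y` has at least `n` steps, and on its first `n/4` points
`ν ≥ 4^{-|α|} M^α` (for `α > 0` after reversing the path so that it starts at the endpoint of larger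
norm).
-/

open Finset Function

section Norms

variable {d : ℕ}

lemma linf_eq_norm (v : Fin d → ℤ) : ((linf v : ℕ) : ℝ) = ‖v‖ := by
  rw [Pi.norm_def, linf, ← NNReal.coe_natCast, Nat.cast_finsetSup]
  simp_rw [NNReal.natCast_natAbs]

lemma natAbs_le_norm (v : Fin d → ℤ) (j : Fin d) : ((v j).natAbs : ℝ) ≤ ‖v‖ := by
  simpa [Nat.cast_natAbs, Int.norm_eq_abs] using norm_le_pi_norm v j

lemma natAbs_le_linf (v : Fin d → ℤ) (j : Fin d) : (v j).natAbs ≤ linf v :=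
  le_sup (f := fun i => (v i).natAbs) (mem_univ j)

lemma one_le_norm_of_ne_zero {v : Fin d → ℤ} (hv : v ≠ 0) : 1 ≤ ‖v‖ := by
  obtain ⟨j, hj⟩ := Function.ne_iff.1 hv
  calc (1 : ℝ) ≤ ((v j).natAbs : ℝ) := by exact_mod_cast Int.natAbs_pos.2 hj
    _ ≤ ‖v‖ := natAbs_le_norm v j

lemma norm_le_l1 (v : Fin d → ℤ) : ‖v‖ ≤ l1 v := by
  rw [← linf_eq_norm, Nat.cast_le]
  exact Finset.sup_le fun i _ => single_le_sum (f := fun i => (v i).natAbs) (by simp) (mem_univ i)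

lemma l1_update_sub_update (u : Fin d → ℤ) (j : Fin d) (a b : ℤ) :
    l1 (update u j a - update u j b) = (a - b).natAbs := by
  rw [l1, sum_eq_single j (fun l _ hl => by simp [hl]) (by simp)]
  simp

lemma l1_sub_comm (u v : Fin d → ℤ) : l1 (u - v) = l1 (v - u) := by
  simp only [l1, Pi.sub_apply, ← Int.natAbs_neg (v _ - u _), neg_sub]

lemma nu_eq (α : ℝ) (v : Fin d → ℤ) : nu α v = max ‖v‖ 1 ^ α := by
  rw [nu, Nat.cast_max, linf_eq_norm, Nat.cast_one]

lemma nu_pos (α : ℝ) (v : Fin d → ℤ) : 0 < nu α v := by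
  rw [nu_eq]; exact Real.rpow_pos_of_pos (by positivity) α

lemma rhox_eq (α : ℝ) (x : Fin d → ℤ) (r : ℝ) : rhox α x r = max ‖x‖ r ^ α * r := by
  rw [rhox, linf_eq_norm]

lemma rhoxInv_eq (α : ℝ) (x : Fin d → ℤ) (r : ℝ) :
    rhoxInv α x r = max ‖x‖ (r ^ (1 + α)⁻¹) ^ (-α) * r := by
  rw [rhoxInv, linf_eq_norm, one_div]

end Norms

lemma rpow_le_rpow_abs_mul_rpow {α c t M : ℝ} (hc : 1 ≤ c) (ht : 0 < t) (hM : 0 < M)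
    (hpos : 0 < α → t ≤ c * M) (hneg : α < 0 → M ≤ c * t) : t ^ α ≤ c ^ |α| * M ^ α := by
  have hc0 : 0 < c := by linarith
  rcases lt_trichotomy α 0 with hα | rfl | hα
  · calc t ^ α ≤ (M / c) ^ α :=
          Real.rpow_le_rpow_of_nonpos (by positivity) (by rw [div_le_iff₀' hc0]; exact hneg hα)
            hα.le
      _ = c ^ |α| * M ^ α := by
          rw [abs_of_neg hα, Real.div_rpow hM.le hc0.le, Real.rpow_neg hc0.le, div_eq_inv_mul]
  · simp
  · calc t ^ α ≤ (c * M) ^ α := Real.rpow_le_rpow ht.le (hpos hα) hα.le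
      _ = c ^ |α| * M ^ α := by rw [abs_of_pos hα, Real.mul_rpow hc0.le hM.le]

-- Tangent-line bound for the concave function `t ↦ t ^ p`, via Bernoulli's inequality.
lemma mul_rpow_sub_one_le_rpow_sub_rpow {p x : ℝ} (hp0 : 0 ≤ p) (hp1 : p ≤ 1) (hx : 1 ≤ x) :
    p * x ^ (p - 1) ≤ x ^ p - (x - 1) ^ p := by
  have hx0 : 0 < x := by linarith
  have hbern := rpow_one_add_le_one_add_mul_self
    (neg_le_neg (inv_le_one_of_one_le₀ hx)) hp0 hp1
  have hsplit : (x - 1) ^ p = x ^ p * (1 + -x⁻¹) ^ p := by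
    rw [← Real.mul_rpow hx0.le (by linarith [inv_le_one_of_one_le₀ hx])]
    congr 1; field_simp; ring
  rw [hsplit, Real.rpow_sub_one hx0.ne']
  have := mul_le_mul_of_nonneg_left hbern (Real.rpow_nonneg hx0.le p)
  have hxp : x ^ p * (1 + p * -x⁻¹) = x ^ p - p * (x ^ p / x) := by ring
  linarith

lemma sum_range_max_one_rpow_le {α : ℝ} (hα : -1 < α) (hα0 : α ≤ 0) (N : ℕ) :
    ∑ k ∈ range (N + 1), max (k : ℝ) 1 ^ α ≤ 1 + (N : ℝ) ^ (1 + α) / (1 + α) := by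
  have hp : 0 < 1 + α := by linarith
  have hterm : ∀ k : ℕ, max ((k + 1 : ℕ) : ℝ) 1 ^ α ≤
      (((k + 1 : ℕ) : ℝ) ^ (1 + α) - (k : ℝ) ^ (1 + α)) / (1 + α) := fun k => by
    have hk : (1 : ℝ) ≤ (k + 1 : ℕ) := by simp
    rw [max_eq_left hk, le_div_iff₀ hp, mul_comm]
    have := mul_rpow_sub_one_le_rpow_sub_rpow hp.le (by linarith) hk
    simpa using this
  calc ∑ k ∈ range (N + 1), max (k : ℝ) 1 ^ α
      = ∑ k ∈ range N, max ((k + 1 : ℕ) : ℝ) 1 ^ α + 1 := by simp [sum_range_succ']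
    _ ≤ ∑ k ∈ range N, (((k + 1 : ℕ) : ℝ) ^ (1 + α) - (k : ℝ) ^ (1 + α)) / (1 + α) + 1 := by
        gcongr with k; exact hterm k
    _ = 1 + (N : ℝ) ^ (1 + α) / (1 + α) := by
        rw [← sum_div, sum_range_sub (fun k : ℕ => (k : ℝ) ^ (1 + α)), Nat.cast_zero,
          Real.zero_rpow hp.ne', sub_zero, add_comm]

section AntitoneSums

variable {g : ℕ → ℝ}

lemma Antitone.sum_le_sum_range_card (hg : Antitone g) (s : Finset ℕ) :
    ∑ k ∈ s, g k ≤ ∑ k ∈ range #s, g k := by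
  induction s using Finset.induction_on_max with
  | empty => simp
  | insert a s has ih =>
    have ha : a ∉ s := fun h => (has a h).false
    have hcard : #s ≤ a := by
      simpa using card_le_card (show s ⊆ range a from fun k hk => mem_range.2 (has k hk))
    rw [sum_insert ha, card_insert_of_notMem ha, sum_range_succ, add_comm]
    exact add_le_add ih (hg hcard)

lemma Antitone.sum_natAbs_le {ι : Type*} (hg : Antitone g) (hg0 : ∀ k, 0 ≤ g k)
    {φ : ι → ℤ} (s : Finset ι) (hφ : Set.InjOn φ s) :
    ∑ i ∈ s, g (φ i).natAbs ≤ 2 * ∑ k ∈ range #s, g k := by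
  have half : ∀ t ⊆ s, Set.InjOn (fun i => (φ i).natAbs) t →
      ∑ i ∈ t, g (φ i).natAbs ≤ ∑ k ∈ range #s, g k := fun t hts ht => by
    calc ∑ i ∈ t, g (φ i).natAbs = ∑ k ∈ t.image (fun i => (φ i).natAbs), g k :=
          (sum_image ht).symm
      _ ≤ ∑ k ∈ range #(t.image fun i => (φ i).natAbs), g k := hg.sum_le_sum_range_card _
      _ ≤ ∑ k ∈ range #s, g k :=
          sum_le_sum_of_subset_of_nonneg
            (range_subset_range.2 ((card_image_le).trans (card_le_card hts)))
            fun k _ _ => hg0 k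
  -- `natAbs ∘ φ` is injective on each of the two sign classes of `φ`.
  rw [← sum_filter_add_sum_filter_not s (fun i => 0 ≤ φ i), two_mul]
  refine add_le_add (half _ (filter_subset _ _) fun i hi j hj hij => ?_)
    (half _ (filter_subset _ _) fun i hi j hj hij => ?_)
  · simp only [coe_filter, Set.mem_ofPred_eq] at hi hj
    exact hφ hi.1 hj.1 (Int.natAbs_inj_of_nonneg_of_nonneg hi.2 hj.2 |>.1 hij)
  · simp only [coe_filter, Set.mem_ofPred_eq, not_le] at hi hj
    exact hφ hi.1 hj.1 (Int.natAbs_inj_of_nonpos_of_nonpos hi.2.le hj.2.le |>.1 hij)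

end AntitoneSums

section RhoxInverse

variable {α : ℝ} {d : ℕ} (x : Fin d → ℤ)

lemma rhox_strictMonoOn (hα : -1 < α) : StrictMonoOn (rhox α x) (Set.Ioi 0) := by
  intro s hs t ht hst
  simp only [Set.mem_Ioi] at hs ht
  simp only [rhox_eq]
  set a := ‖x‖
  have hpow : ∀ {u v : ℝ}, 0 < u → u < v → u ^ α * u < v ^ α * v := fun {u v} hu huv => by
    rw [← Real.rpow_add_one hu.ne', ← Real.rpow_add_one (by linarith : v ≠ 0)]
    exact Real.rpow_lt_rpow hu.le huv (by linarith)
  rcases le_or_gt a s with has | has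
  · rw [max_eq_right has, max_eq_right (has.trans hst.le)]
    exact hpow hs hst
  · rw [max_eq_left has.le]
    rcases le_or_gt t a with hta | hta
    · rw [max_eq_left hta]
      exact mul_lt_mul_of_pos_left hst (Real.rpow_pos_of_pos (hs.trans has) α)
    · rw [max_eq_right hta.le]
      exact (mul_lt_mul_of_pos_left has (Real.rpow_pos_of_pos (hs.trans has) α)).trans
        (hpow (hs.trans has) hta)

variable {x}

lemma rhoxInv_pos {s : ℝ} (hs : 0 < s) : 0 < rhoxInv α x s := by
  rw [rhoxInv_eq]
  exact mul_pos (Real.rpow_pos_of_pos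
    ((Real.rpow_pos_of_pos hs _).trans_le (le_max_right _ _)) _) hs

lemma rhox_rhoxInv (hα : -1 < α) {s : ℝ} (hs : 0 < s) : rhox α x (rhoxInv α x s) = s := by
  have hp : 1 + α ≠ 0 := by linarith
  set a := ‖x‖
  set b := s ^ (1 + α)⁻¹
  have hb : 0 < b := Real.rpow_pos_of_pos hs _
  have hbs : b ^ (1 + α) = s := Real.rpow_inv_rpow hs.le hp
  rw [rhoxInv_eq, rhox_eq]
  rcases le_or_gt a b with hab | hab
  · have hinv : b ^ (-α) * s = b := by
      rw [← hbs, ← Real.rpow_add hb, show -α + (1 + α) = 1 by ring, Real.rpow_one]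
    rw [max_eq_right hab, hinv, max_eq_right hab, ← Real.rpow_add_one hb.ne', add_comm, hbs]
  · have ha : 0 < a := hb.trans hab
    have hle : a ^ (-α) * s ≤ a := by
      calc a ^ (-α) * s ≤ a ^ (-α) * a ^ (1 + α) := by
            rw [← hbs]
            gcongr
            linarith
        _ = a := by rw [← Real.rpow_add ha, show -α + (1 + α) = 1 by ring, Real.rpow_one]
    rw [max_eq_left hab.le, max_eq_left hle, ← mul_assoc, ← Real.rpow_add ha, add_neg_cancel,
      Real.rpow_zero, one_mul]

lemma le_rhoxInv_iff (hα : -1 < α) {s t : ℝ} (hs : 0 < s) (ht : 0 < t) :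
    t ≤ rhoxInv α x s ↔ rhox α x t ≤ s := by
  conv_rhs => rw [← rhox_rhoxInv (x := x) hα hs]
  exact ((rhox_strictMonoOn x hα).le_iff_le ht (rhoxInv_pos hs)).symm

end RhoxInverse

section Paths

variable {d : ℕ} {z : ℕ → Fin d → ℤ} {m : ℕ}

lemma IsPath.norm_sub_le (hz : IsPath z m) {i : ℕ} (hi : i ≤ m) : ‖z i - z 0‖ ≤ i := by
  rw [← dist_eq_norm, dist_comm]
  calc dist (z 0) (z i) ≤ ∑ k ∈ range i, dist (z k) (z (k + 1)) := dist_le_range_sum_dist z i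
    _ ≤ ∑ _k ∈ range i, (1 : ℝ) := sum_le_sum fun k hk => by
        rw [dist_comm, dist_eq_norm]
        exact (norm_le_l1 _).trans (by rw [hz k (by simp at hk; omega)]; simp)
    _ = i := by simp

lemma IsPath.reverse (hz : IsPath z m) : IsPath (fun i => z (m - i)) m := by
  intro i hi
  have h := hz (m - (i + 1)) (by omega)
  rw [show m - (i + 1) + 1 = m - i by omega, l1_sub_comm] at h
  exact h

end Paths

def JoinedWithin (α : ℝ) {d : ℕ} (x y : Fin d → ℤ) (T : ℝ) : Prop :=
  ∃ (m : ℕ) (z : ℕ → Fin d → ℤ), IsPath z m ∧ z 0 = x ∧ z m = y ∧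
    ∑ i ∈ range (m + 1), nu α (z i) ≤ T

namespace JoinedWithin

variable {α : ℝ} {d : ℕ} {x y w : Fin d → ℤ} {S T : ℝ}

lemma mono (h : JoinedWithin α x y S) (hST : S ≤ T) : JoinedWithin α x y T :=
  let ⟨m, z, hz, h0, hm, hS⟩ := h
  ⟨m, z, hz, h0, hm, hS.trans hST⟩

lemma refl (α : ℝ) (x : Fin d → ℤ) : JoinedWithin α x x (nu α x) :=
  ⟨0, fun _ => x, fun _ h => absurd h (Nat.not_lt_zero _), rfl, rfl, by simp⟩

lemma trans (h₁ : JoinedWithin α x w S) (h₂ : JoinedWithin α w y T) :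
    JoinedWithin α x y (S + T) := by
  obtain ⟨m₁, z₁, hz₁, h0₁, hm₁, hS⟩ := h₁
  obtain ⟨m₂, z₂, hz₂, h0₂, hm₂, hT⟩ := h₂
  set z : ℕ → Fin d → ℤ := fun i => if i ≤ m₁ then z₁ i else z₂ (i - m₁) with hz
  have hz_le : ∀ i ≤ m₁, z i = z₁ i := fun i hi => if_pos hi
  have hz_add : ∀ i, z (m₁ + i) = z₂ i := fun i => by
    rcases Nat.eq_zero_or_pos i with rfl | hi
    · simp [hz, hm₁, h0₂]
    · simp [hz, show ¬ m₁ + i ≤ m₁ by omega]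
  refine ⟨m₁ + m₂, z, fun i hi => ?_, by simp [hz, h0₁], by rw [hz_add, hm₂], ?_⟩
  · rcases lt_or_ge i m₁ with h | h
    · rw [hz_le i h.le, hz_le (i + 1) h]; exact hz₁ i h
    · obtain ⟨k, rfl⟩ := Nat.exists_eq_add_of_le h
      rw [add_assoc, hz_add, hz_add]; exact hz₂ k (by omega)
  · have hsplit : ∑ i ∈ range (m₁ + m₂ + 1), nu α (z i) =
        ∑ i ∈ range (m₁ + 1), nu α (z₁ i) + ∑ k ∈ range m₂, nu α (z₂ (k + 1)) := by
      rw [add_right_comm, sum_range_add]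
      congr 1
      · exact sum_congr rfl fun i hi => by rw [hz_le i (by simp at hi; omega)]
      · exact sum_congr rfl fun k _ => by rw [add_assoc, add_comm 1, hz_add]
    have hz₂ : ∑ k ∈ range m₂, nu α (z₂ (k + 1)) ≤ ∑ k ∈ range (m₂ + 1), nu α (z₂ k) := by
      rw [sum_range_succ']; exact le_add_of_nonneg_right (nu_pos α _).le
    linarith

end JoinedWithin

section Rho

variable {α : ℝ} {d : ℕ} {x y : Fin d → ℤ}

lemma rho_le_of_joinedWithin {T : ℝ} (h : JoinedWithin α x y T) : rho α x y ≤ T := by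
  obtain ⟨m, z, hz, h0, hm, hT⟩ := h
  unfold rho
  split_ifs
  · exact (sum_nonneg fun i _ => (nu_pos α (z i)).le).trans hT
  · refine le_trans (csInf_le ?_ ?_) hT
    · refine ⟨0, ?_⟩
      rintro _ ⟨m', z', -, -, -, rfl⟩
      exact sum_nonneg fun i _ => (nu_pos α (z' i)).le
    · exact ⟨m, z, hz, h0, hm, rfl⟩

lemma le_rho_of_forall_path (hxy : x ≠ y) {T c : ℝ} (h : JoinedWithin α x y T)
    (hc : ∀ (m : ℕ) (z : ℕ → Fin d → ℤ), IsPath z m → z 0 = x → z m = y →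
      c ≤ ∑ i ∈ range (m + 1), nu α (z i)) :
    c ≤ rho α x y := by
  obtain ⟨m, z, hz, h0, hm, -⟩ := h
  rw [rho, if_neg hxy]
  refine le_csInf ⟨_, m, z, hz, h0, hm, rfl⟩ ?_
  rintro _ ⟨m', z', hz', h0', hm', rfl⟩
  exact hc m' z' hz' h0' hm'

end Rho

section CoordinatePaths

variable {d : ℕ}

lemma joinedWithin_update (α : ℝ) (u : Fin d → ℤ) (j : Fin d) (a b : ℤ) :
    JoinedWithin α (update u j a) (update u j b)
      (∑ i ∈ range ((b - a).natAbs + 1), nu α (update u j (a + (b - a).sign * i))) := by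
  refine ⟨(b - a).natAbs, fun i => update u j (a + (b - a).sign * i), fun i hi => ?_,
    by simp, by simp only [Int.sign_mul_natAbs, add_sub_cancel], le_rfl⟩
  have hba : b - a ≠ 0 := by omega
  simp only [l1_update_sub_update, Nat.cast_succ]
  rw [show a + (b - a).sign * (i + 1) - (a + (b - a).sign * i) = (b - a).sign by ring,
    Int.natAbs_sign_of_ne_zero hba]

lemma JoinedWithin.of_coordinatewise {α : ℝ} {x y : Fin d → ℤ} (b : Fin d → ℝ)
    (hb : ∀ j (u : Fin d → ℤ), ‖u - x‖ ≤ ‖y - x‖ →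
      ∑ i ∈ range ((y j - x j).natAbs + 1), nu α (update u j (x j + (y j - x j).sign * i))
        ≤ b j) :
    JoinedWithin α x y (nu α x + ∑ j, b j) := by
  classical
  suffices ∀ s : Finset (Fin d), JoinedWithin α x (s.piecewise y x) (nu α x + ∑ j ∈ s, b j) by
    simpa using this univ
  intro s
  induction s using Finset.induction_on with
  | empty => simpa using JoinedWithin.refl α x
  | insert j s hj ih =>
    set u := s.piecewise y x
    have hu : ‖u - x‖ ≤ ‖y - x‖ := (pi_norm_le_iff_of_nonneg (norm_nonneg _)).2 fun l => by
      by_cases hl : l ∈ s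
      · simpa [u, hl] using norm_le_pi_norm (y - x) l
      · simp [u, hl]
    have hseg := joinedWithin_update α u j (x j) (y j)
    have hxj : update u j (x j) = u := by
      rw [← s.piecewise_eq_of_notMem y x hj, update_eq_self]
    rw [hxj, ← piecewise_insert] at hseg
    rw [sum_insert hj, add_left_comm, ← add_assoc]
    exact (ih.trans hseg).mono (by linarith [hb j u hu])

end CoordinatePaths

noncomputable def upperConst (d : ℕ) (α : ℝ) : ℝ := (1 + 2 * d * (1 + (1 + α)⁻¹)) * 2 ^ |α|

lemma upperConst_pos {d : ℕ} {α : ℝ} (hα : -1 < α) : 0 < upperConst d α := by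
  have : 0 < (1 + α)⁻¹ := inv_pos.2 (by linarith)
  unfold upperConst; positivity

section UpperBound

variable {α : ℝ} {d : ℕ} {x y : Fin d → ℤ}

lemma norm_update_segment_sub_le {u : Fin d → ℤ} (hu : ‖u - x‖ ≤ ‖y - x‖) {j : Fin d} {i : ℕ}
    (hi : i ≤ (y j - x j).natAbs) :
    ‖update u j (x j + (y j - x j).sign * i) - x‖ ≤ ‖y - x‖ := by
  refine (pi_norm_le_iff_of_nonneg (norm_nonneg _)).2 fun l => ?_
  rcases eq_or_ne l j with rfl | hl
  · have hsign : ‖(y l - x l).sign‖ ≤ 1 := by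
      rcases Int.sign_trichotomy (y l - x l) with h | h | h <;> simp [h]
    simp only [Pi.sub_apply, update_self, add_sub_cancel_left, norm_mul, Int.norm_natCast]
    calc ‖(y l - x l).sign‖ * i ≤ i := mul_le_of_le_one_left i.cast_nonneg hsign
      _ ≤ ‖y - x‖ := (Nat.cast_le.2 hi).trans (natAbs_le_norm (y - x) l)
  · simpa [hl] using norm_le_pi_norm (u - x) l |>.trans hu

lemma JoinedWithin.of_nu_le {B : ℝ} (hB : ∀ v, ‖v - x‖ ≤ ‖y - x‖ → nu α v ≤ B) :
    JoinedWithin α x y ((1 + d * (‖y - x‖ + 1)) * B) := by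
  have hxB : nu α x ≤ B := hB x (by simp)
  have hB0 : 0 ≤ B := (nu_pos α x).le.trans hxB
  refine (JoinedWithin.of_coordinatewise (fun _ => (‖y - x‖ + 1) * B) fun j u hu => ?_).mono ?_
  · calc _ ≤ ∑ _i ∈ range ((y j - x j).natAbs + 1), B :=
          sum_le_sum fun i hi => hB _ (norm_update_segment_sub_le hu (by simp at hi; omega))
      _ = ((y j - x j).natAbs + 1) * B := by simp
      _ ≤ (‖y - x‖ + 1) * B := by gcongr; exact natAbs_le_norm (y - x) j
  · simp only [sum_const, card_univ, Fintype.card_fin, nsmul_eq_mul]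
    nlinarith

lemma JoinedWithin.of_nonpos (hα0 : α ≤ 0) :
    JoinedWithin α x y (1 + 2 * d * ∑ k ∈ range (linf (y - x) + 1), max (k : ℝ) 1 ^ α) := by
  set g : ℕ → ℝ := fun k => max (k : ℝ) 1 ^ α
  have hg : Antitone g := fun a b hab =>
    Real.rpow_le_rpow_of_nonpos (by positivity) (max_le_max (by exact_mod_cast hab) le_rfl) hα0
  have hg0 : ∀ k, 0 ≤ g k := fun k => by positivity
  refine (JoinedWithin.of_coordinatewise (fun _ => 2 * ∑ k ∈ range (linf (y - x) + 1), g k)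
    fun j u _ => ?_).mono ?_
  · set s := (y j - x j).sign
    have hinj : Set.InjOn (fun i : ℕ => x j + s * i) (range ((y j - x j).natAbs + 1)) := by
      intro i hi i' hi' h
      rcases eq_or_ne (y j - x j) 0 with h0 | h0
      · simp_all
      · exact_mod_cast mul_left_cancel₀ (Int.sign_eq_zero_iff_zero.not.2 h0) (add_left_cancel h)
    calc _ ≤ ∑ i ∈ range ((y j - x j).natAbs + 1), g (x j + s * i).natAbs :=
          sum_le_sum fun i _ => by
            rw [nu_eq]
            refine Real.rpow_le_rpow_of_nonpos (by positivity) (max_le_max ?_ le_rfl) hα0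
            simpa using natAbs_le_norm (update u j (x j + s * i)) j
      _ ≤ 2 * ∑ k ∈ range ((y j - x j).natAbs + 1), g k := by
          simpa using hg.sum_natAbs_le hg0 _ hinj
      _ ≤ 2 * ∑ k ∈ range (linf (y - x) + 1), g k := by
          gcongr
          exact natAbs_le_linf (y - x) j
  · have hx1 : nu α x ≤ 1 := by
      rw [nu_eq]; exact Real.rpow_le_one_of_one_le_of_nonpos (le_max_right _ _) hα0
    simp only [sum_const, card_univ, Fintype.card_fin, nsmul_eq_mul]
    linarith

lemma joinedWithin_of_far (hα : -1 < α) (hxy : x ≠ y) (hfar : 0 ≤ α ∨ 2 * ‖y - x‖ ≤ ‖x‖) :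
    JoinedWithin α x y (upperConst d α * rhox α x ‖y - x‖) := by
  set n := ‖y - x‖
  set M := max ‖x‖ n
  have hn : 1 ≤ n := one_le_norm_of_ne_zero (sub_ne_zero.2 hxy.symm)
  have hM : 1 ≤ M := hn.trans (le_max_right _ _)
  refine (JoinedWithin.of_nu_le (B := 2 ^ |α| * M ^ α) fun v hv => ?_).mono ?_
  · rw [nu_eq]
    have hv₁ := norm_le_norm_add_norm_sub' v x
    have hv₂ := norm_sub_norm_le x v
    rw [norm_sub_rev] at hv₂
    refine rpow_le_rpow_abs_mul_rpow (by norm_num) (by positivity) (by positivity)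
      (fun _ => max_le (by linarith [le_max_left ‖x‖ n, le_max_right ‖x‖ n]) (by linarith))
      fun hα0 => ?_
    have h2n := hfar.resolve_left (not_le.2 hα0)
    rw [show M = ‖x‖ from max_eq_left (by linarith)]
    linarith [le_max_left ‖v‖ 1]
  · have hp : 0 < (1 + α)⁻¹ := inv_pos.2 (by linarith)
    have hc : 1 + d * (n + 1) ≤ (1 + 2 * d * (1 + (1 + α)⁻¹)) * n := by
      have : (0 : ℝ) ≤ d := d.cast_nonneg
      nlinarith [mul_nonneg this hp.le, mul_nonneg (mul_nonneg this hp.le) (by linarith : 0 ≤ n)]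
    rw [rhox_eq, upperConst]
    calc (1 + d * (n + 1)) * (2 ^ |α| * M ^ α)
        ≤ (1 + 2 * d * (1 + (1 + α)⁻¹)) * n * (2 ^ |α| * M ^ α) := by gcongr
      _ = _ := by ring

lemma joinedWithin_of_near (hα : -1 < α) (hxy : x ≠ y) (hα0 : α < 0)
    (hnear : ‖x‖ < 2 * ‖y - x‖) :
    JoinedWithin α x y (upperConst d α * rhox α x ‖y - x‖) := by
  set n := ‖y - x‖
  set M := max ‖x‖ n
  have hn : 1 ≤ n := one_le_norm_of_ne_zero (sub_ne_zero.2 hxy.symm)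
  have hp : 0 < 1 + α := by linarith
  have hsum := sum_range_max_one_rpow_le hα hα0.le (linf (y - x))
  rw [linf_eq_norm] at hsum
  have hnp : 1 ≤ n ^ (1 + α) := Real.one_le_rpow hn hp.le
  have hnα : n ^ α ≤ 2 ^ |α| * M ^ α :=
    rpow_le_rpow_abs_mul_rpow (by norm_num) (by positivity) (by positivity)
      (fun h => absurd h (not_lt.2 hα0.le)) fun _ => max_le (by linarith) (by linarith)
  refine (JoinedWithin.of_nonpos hα0.le).mono ?_
  rw [rhox_eq, upperConst]
  have hd : (0 : ℝ) ≤ d := d.cast_nonneg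
  calc 1 + 2 * d * ∑ k ∈ range (linf (y - x) + 1), max (k : ℝ) 1 ^ α
      ≤ 1 + 2 * d * (1 + n ^ (1 + α) / (1 + α)) := by gcongr
    _ ≤ (1 + 2 * d * (1 + (1 + α)⁻¹)) * n ^ (1 + α) := by
        rw [div_eq_mul_inv]
        nlinarith [mul_nonneg hd (inv_pos.2 hp).le]
    _ = (1 + 2 * d * (1 + (1 + α)⁻¹)) * n ^ α * n := by
        rw [add_comm 1 α, Real.rpow_add_one (by linarith)]; ring
    _ ≤ (1 + 2 * d * (1 + (1 + α)⁻¹)) * (2 ^ |α| * M ^ α) * n := by gcongr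
    _ = _ := by ring

lemma joinedWithin_upperConst (hα : -1 < α) (hxy : x ≠ y) :
    JoinedWithin α x y (upperConst d α * rhox α x ‖y - x‖) := by
  rcases le_or_gt 0 α with hα0 | hα0
  · exact joinedWithin_of_far hα hxy (.inl hα0)
  rcases le_or_gt (2 * ‖y - x‖) ‖x‖ with hfar | hnear
  · exact joinedWithin_of_far hα hxy (.inr hfar)
  · exact joinedWithin_of_near hα hxy hα0 hnear

end UpperBound

section LowerBound

variable {α : ℝ} {d : ℕ} {x y : Fin d → ℤ} {z : ℕ → Fin d → ℤ} {m : ℕ}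

lemma rhox_le_pathWeight_of_norm_le (hxy : x ≠ y) (hyx : 0 < α → ‖y‖ ≤ ‖x‖)
    (hz : IsPath z m) (h0 : z 0 = x) (hm : z m = y) :
    rhox α x ‖y - x‖ ≤ 4 * 4 ^ |α| * ∑ i ∈ range (m + 1), nu α (z i) := by
  set n := ‖y - x‖
  set N := linf (y - x)
  have hNn : (N : ℝ) = n := linf_eq_norm _
  set M := max ‖x‖ n
  have hn : 1 ≤ n := one_le_norm_of_ne_zero (sub_ne_zero.2 hxy.symm)
  have hM : 1 ≤ M := hn.trans (le_max_right _ _)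
  have hNm : N ≤ m := by
    have : n ≤ m := by simpa [h0, hm] using hz.norm_sub_le le_rfl
    exact_mod_cast hNn ▸ this
  have hK : N < 4 * (N / 4 + 1) := by omega
  have hpoint : ∀ i ≤ N / 4, M ^ α ≤ 4 ^ |α| * nu α (z i) := fun i hi => by
    have hi' : 4 * (i : ℝ) ≤ n := by rw [← hNn]; exact_mod_cast (by omega : 4 * i ≤ N)
    have hzi := hz.norm_sub_le (hi.trans ((Nat.div_le_self _ _).trans hNm))
    rw [h0] at hzi
    have hup := norm_le_norm_add_norm_sub' (z i) x
    have hlow := norm_sub_norm_le x (z i)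
    rw [norm_sub_rev] at hlow
    have hxM := le_max_left ‖x‖ n
    have hnM := le_max_right ‖x‖ n
    have hz1 := le_max_left ‖z i‖ 1
    rw [nu_eq]
    refine rpow_le_rpow_abs_mul_rpow (by norm_num) (by positivity) (by positivity)
      (fun hα0 => ?_) fun _ => max_le (by linarith) (by linarith)
    have h2 : n ≤ 2 * ‖x‖ := by linarith [norm_sub_le y x, hyx hα0]
    exact max_le (by linarith) (by linarith)
  calc rhox α x n = M ^ α * n := rhox_eq α x n
    _ ≤ 4 * ∑ _i ∈ range (N / 4 + 1), M ^ α := by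
        rw [sum_const, card_range, nsmul_eq_mul]
        have : n ≤ 4 * ((N / 4 : ℕ) + 1 : ℝ) := by rw [← hNn]; exact_mod_cast hK.le
        push_cast at this ⊢
        nlinarith [Real.rpow_pos_of_pos (by linarith : (0 : ℝ) < M) α]
    _ ≤ 4 * ∑ i ∈ range (N / 4 + 1), 4 ^ |α| * nu α (z i) := by
        gcongr with i hi
        exact hpoint i (Nat.lt_succ_iff.1 (mem_range.1 hi))
    _ ≤ 4 * ∑ i ∈ range (m + 1), 4 ^ |α| * nu α (z i) := by
        gcongr
        · exact fun i _ _ => mul_nonneg (by positivity) (nu_pos α _).le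
        · omega
    _ = 4 * 4 ^ |α| * ∑ i ∈ range (m + 1), nu α (z i) := by rw [← mul_sum, mul_assoc]

lemma rhox_le_pathWeight (hxy : x ≠ y) (hz : IsPath z m) (h0 : z 0 = x) (hm : z m = y) :
    rhox α x ‖y - x‖ ≤ 4 * 4 ^ |α| * ∑ i ∈ range (m + 1), nu α (z i) := by
  by_cases hyx : 0 < α → ‖y‖ ≤ ‖x‖
  · exact rhox_le_pathWeight_of_norm_le hxy hyx hz h0 hm
  push Not at hyx
  have hrev := rhox_le_pathWeight_of_norm_le (α := α) hxy.symm (fun _ => hyx.2.le) hz.reverse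
    (by simpa using hm) (by simpa using h0)
  have hreflect := sum_range_reflect (fun i => nu α (z i)) (m + 1)
  simp only [add_tsub_cancel_right] at hreflect
  rw [hreflect, norm_sub_rev] at hrev
  refine le_trans ?_ hrev
  rw [rhox_eq, rhox_eq]
  exact mul_le_mul_of_nonneg_right
    (Real.rpow_le_rpow (by positivity) (max_le_max hyx.2.le le_rfl) hyx.1.le) (norm_nonneg _)

lemma rhox_le_rho (hα : -1 < α) (hxy : x ≠ y) :
    rhox α x ‖y - x‖ ≤ 4 * 4 ^ |α| * rho α x y := by
  rw [← div_le_iff₀' (by positivity)]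
  exact le_rho_of_forall_path hxy (joinedWithin_upperConst hα hxy) fun m z hz h0 hm =>
    (div_le_iff₀' (by positivity)).2 (rhox_le_pathWeight hxy hz h0 hm)

end LowerBound

theorem rho_ball_comparison_general (d : ℕ) (α : ℝ) (hα : -1 < α) :
    ∃ c₁ c₂ : ℝ, 0 < c₁ ∧ 0 < c₂ ∧
      ∀ (x : Fin d → ℤ) (r : ℝ), 0 < r →
        {y : Fin d → ℤ | ((linf (y - x) : ℕ) : ℝ) ≤ rhoxInv α x (c₁ * r)} ⊆
            {y : Fin d → ℤ | rho α x y ≤ r} ∧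
          {y : Fin d → ℤ | rho α x y ≤ r} ⊆
            {y : Fin d → ℤ | ((linf (y - x) : ℕ) : ℝ) ≤ rhoxInv α x (c₂ * r)} := by
  have hK : 0 < upperConst d α := upperConst_pos hα
  refine ⟨(upperConst d α)⁻¹, 4 * 4 ^ |α|, inv_pos.2 hK, by positivity, fun x r hr => ⟨?_, ?_⟩⟩
  · intro y hy
    rw [Set.mem_ofPred_eq, linf_eq_norm] at hy
    rcases eq_or_ne x y with rfl | hxy
    · simp [rho, hr.le]
    have hρx := (le_rhoxInv_iff hα (by positivity) (norm_pos_iff.2 (sub_ne_zero.2 hxy.symm))).1 hy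
    calc rho α x y ≤ upperConst d α * rhox α x ‖y - x‖ :=
          rho_le_of_joinedWithin (joinedWithin_upperConst hα hxy)
      _ ≤ upperConst d α * ((upperConst d α)⁻¹ * r) := by gcongr
      _ = r := by field_simp
  · intro y hy
    rw [Set.mem_ofPred_eq] at hy
    rw [Set.mem_ofPred_eq, linf_eq_norm]
    rcases eq_or_ne x y with rfl | hxy
    · simpa using (rhoxInv_pos (by positivity)).le
    rw [le_rhoxInv_iff hα (by positivity) (norm_pos_iff.2 (sub_ne_zero.2 hxy.symm))]
    calc rhox α x ‖y - x‖ ≤ 4 * 4 ^ |α| * rho α x y := rhox_le_rho hα hxy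
      _ ≤ 4 * 4 ^ |α| * r := by gcongr

/-- There are constants `c₁, c₂ > 0`, depending only on `α` and `d`,
such that for every `x ∈ ℤ^d` and `r > 0`,
`B(x, ρ_x⁻¹(c₁ r)) ⊆ B_ρ(x, r) ⊆ B(x, ρ_x⁻¹(c₂ r))`. -/
theorem rho_ball_comparison (d : ℕ) (hd : 1 ≤ d) (α : ℝ) (hα : -1 < α) :
    ∃ c₁ c₂ : ℝ, 0 < c₁ ∧ 0 < c₂ ∧
      ∀ (x : Fin d → ℤ) (r : ℝ), 0 < r →
        {y : Fin d → ℤ | ((linf (y - x) : ℕ) : ℝ) ≤ rhoxInv α x (c₁ * r)} ⊆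
            {y : Fin d → ℤ | rho α x y ≤ r} ∧
          {y : Fin d → ℤ | rho α x y ≤ r} ⊆
            {y : Fin d → ℤ | ((linf (y - x) : ℕ) : ℝ) ≤ rhoxInv α x (c₂ * r)} :=
  rho_ball_comparison_general d α hα
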